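/- Let (q₁, q₂, p₁, p₂) : ℝ → ℝ⁴ be differentiable functions satisfying Hamilton's equations q̇₁ = p₁(q₁² + q₂²), q̇₂ = p₂(q₁² + q₂²), ṗ₁ = −q₁(p₁² − p₂²) − 2p₁p₂q₂, ṗ₂ = −q₂(p₂² − p₁²) − 2p₁p₂q₁, with q₁(t)² + q₂(t)² > 0 for all t, and suppose the arc-length condition q̇₁(t)² + q̇₂(t)² = 1 holds for all t. Then the function t ↦ q₁(t)² + q₂(t)² is constant. -/

import Mathlib

/-!
The quantity `H = ⟨p, f₁(q)⟩² + ⟨p, f₂(q)⟩²`, twice the normal Hamiltonian of the control system,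
is a first integral of Hamilton's equations. By Lagrange's identity `H = |p|² |q|²`, while the
equations give `|q̇|² = |p|² |q|⁴`, so the arc-length condition reads `H · |q|² = 1`. Hence `|q|²`
is the constant `H⁻¹`.
-/

def controlHamiltonian (q₁ q₂ p₁ p₂ : ℝ) : ℝ :=
  (p₁ * q₁ + p₂ * q₂) ^ 2 + (p₁ * q₂ - p₂ * q₁) ^ 2

theorem controlHamiltonian_eq (q₁ q₂ p₁ p₂ : ℝ) :
    controlHamiltonian q₁ q₂ p₁ p₂ = (p₁ ^ 2 + p₂ ^ 2) * (q₁ ^ 2 + q₂ ^ 2) := by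
  unfold controlHamiltonian
  ring

theorem controlHamiltonian_mul_normSq_eq_one {q₁ q₂ p₁ p₂ : ℝ}
    (h : (p₁ * (q₁ ^ 2 + q₂ ^ 2)) ^ 2 + (p₂ * (q₁ ^ 2 + q₂ ^ 2)) ^ 2 = 1) :
    controlHamiltonian q₁ q₂ p₁ p₂ * (q₁ ^ 2 + q₂ ^ 2) = 1 := by
  rw [controlHamiltonian_eq, ← h]
  ring

theorem hasDerivAt_controlHamiltonian {q₁ q₂ p₁ p₂ : ℝ → ℝ} {t : ℝ}
    (hq₁ : HasDerivAt q₁ (p₁ t * (q₁ t ^ 2 + q₂ t ^ 2)) t)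
    (hq₂ : HasDerivAt q₂ (p₂ t * (q₁ t ^ 2 + q₂ t ^ 2)) t)
    (hp₁ : HasDerivAt p₁ (-q₁ t * (p₁ t ^ 2 - p₂ t ^ 2) - 2 * p₁ t * p₂ t * q₂ t) t)
    (hp₂ : HasDerivAt p₂ (-q₂ t * (p₂ t ^ 2 - p₁ t ^ 2) - 2 * p₁ t * p₂ t * q₁ t) t) :
    HasDerivAt (fun s ↦ controlHamiltonian (q₁ s) (q₂ s) (p₁ s) (p₂ s)) 0 t := by
  refine ((((hp₁.mul hq₁).add (hp₂.mul hq₂)).pow 2).add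
    (((hp₁.mul hq₂).sub (hp₂.mul hq₁)).pow 2)).congr_deriv ?_
  simp only [Pi.add_apply, Pi.mul_apply, Pi.sub_apply]
  ring

theorem stmt_5_general (q₁ q₂ p₁ p₂ : ℝ → ℝ)
    (hq₁ : Differentiable ℝ q₁) (hq₂ : Differentiable ℝ q₂)
    (hp₁ : Differentiable ℝ p₁) (hp₂ : Differentiable ℝ p₂)
    (heq1 : ∀ t, deriv q₁ t = p₁ t * (q₁ t ^ 2 + q₂ t ^ 2))
    (heq2 : ∀ t, deriv q₂ t = p₂ t * (q₁ t ^ 2 + q₂ t ^ 2))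
    (heq3 : ∀ t, deriv p₁ t = -q₁ t * (p₁ t ^ 2 - p₂ t ^ 2) - 2 * p₁ t * p₂ t * q₂ t)
    (heq4 : ∀ t, deriv p₂ t = -q₂ t * (p₂ t ^ 2 - p₁ t ^ 2) - 2 * p₁ t * p₂ t * q₁ t)
    (harc : ∀ t, (deriv q₁ t)^2 + (deriv q₂ t)^2 = 1) :
    ∃ K : ℝ, ∀ t, q₁ t ^ 2 + q₂ t ^ 2 = K := by
  set H := fun s ↦ controlHamiltonian (q₁ s) (q₂ s) (p₁ s) (p₂ s)
  have hH : ∀ t, HasDerivAt H 0 t := fun t ↦ by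
    apply hasDerivAt_controlHamiltonian
    · exact heq1 t ▸ (hq₁ t).hasDerivAt
    · exact heq2 t ▸ (hq₂ t).hasDerivAt
    · exact heq3 t ▸ (hp₁ t).hasDerivAt
    · exact heq4 t ▸ (hp₂ t).hasDerivAt
  have H_const : ∀ t, H t = H 0 := fun t ↦
    is_const_of_deriv_eq_zero (fun s ↦ (hH s).differentiableAt) (fun s ↦ (hH s).deriv) t 0
  refine ⟨(H 0)⁻¹, fun t ↦ ?_⟩
  rw [← H_const t]
  exact eq_inv_of_mul_eq_one_right
    (controlHamiltonian_mul_normSq_eq_one (heq1 t ▸ heq2 t ▸ harc t))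

/-- If `(q₁,q₂,p₁,p₂)` are differentiable, satisfy Hamilton's equations,
`q₁(t)² + q₂(t)² > 0` for all `t`, and the arc-length condition `q̇₁² + q̇₂² = 1` holds
for all `t`, then `t ↦ q₁(t)² + q₂(t)²` is constant. -/
theorem stmt_5 (q₁ q₂ p₁ p₂ : ℝ → ℝ)
    (hq₁ : Differentiable ℝ q₁) (hq₂ : Differentiable ℝ q₂)
    (hp₁ : Differentiable ℝ p₁) (hp₂ : Differentiable ℝ p₂)
    (hpos : ∀ t, 0 < q₁ t ^ 2 + q₂ t ^ 2)
    (heq1 : ∀ t, deriv q₁ t = p₁ t * (q₁ t ^ 2 + q₂ t ^ 2))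
    (heq2 : ∀ t, deriv q₂ t = p₂ t * (q₁ t ^ 2 + q₂ t ^ 2))
    (heq3 : ∀ t, deriv p₁ t = -q₁ t * (p₁ t ^ 2 - p₂ t ^ 2) - 2 * p₁ t * p₂ t * q₂ t)
    (heq4 : ∀ t, deriv p₂ t = -q₂ t * (p₂ t ^ 2 - p₁ t ^ 2) - 2 * p₁ t * p₂ t * q₁ t)
    (harc : ∀ t, (deriv q₁ t)^2 + (deriv q₂ t)^2 = 1) :
    ∃ K : ℝ, ∀ t, q₁ t ^ 2 + q₂ t ^ 2 = K :=
  stmt_5_general q₁ q₂ p₁ p₂ hq₁ hq₂ hp₁ hp₂ heq1 heq2 heq3 heq4 harc
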